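/- Let Δ be the maximum degree of H̄, let i ≥ 0 be an integer with dn ≥ 2i + 8d, and let G be a d-regular simple graph on V with exactly i red edges. Then the number b(G) of 6-tuples valid for an inverse 3-edge switching on G satisfies (2|E(H̄)|−2i)·d²·(dn−2i−8d) − 4|E(H̄)|·d³·(d+Δ) − 4iΔd²n ≤ b(G) ≤ 2|E(H̄)|·d³·n. -/

import Mathlib

/-!
Call a 6-tuple a *frame* when `v0v1` is a red non-edge of `G` and `v1v2`, `v3v4`, `v0v5` are
edges of `G`. Regularity makes the number of frames exact, `2(|E(H̄)| - i) · d · dn · d`.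
A valid tuple is a frame except that `v0v1` is only known to be red, which gives the upper
bound. A frame that is not valid has one of nine defects: `v3v4`, `v0v5` or `v1v2` is red;
`v3` or `v4` lies in `{v0, v1, v2, v5}`; `v2v3` or `v4v5` is an edge of `G` or red. The tuples
with a given defect are counted by choosing the vertices one at a time along a spanning forest
of the imposed adjacencies, each choice contributing a factor `d`, `Δ`, `4`, or a number of
ordered edges.

In the sums this is mechanical: the indicator of a conjunction is the product of the
indicators, and summing an indicator `[K.Adj a x]` over the last-chosen vertex `x` produces
`K.degree a`.
-/

open SimpleGraph
open scoped Classical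

/-- A 6-tuple `(v0,…,v5)` is valid for an inverse 3-edge switching on `G` (host graph `H`):
`v0v1` is a red non-edge of `G`; `v0v5`, `v1v2`, `v3v4` are black edges of `G`;
`v2v3`, `v4v5` are black non-edges of `G`; vertices distinct except `v2 = v5` allowed. -/
def Valid3Inverse {n : ℕ} (H G : SimpleGraph (Fin n))
    (v0 v1 v2 v3 v4 v5 : Fin n) : Prop :=
  (¬ G.Adj v0 v1 ∧ Hᶜ.Adj v0 v1) ∧
  (G.Adj v0 v5 ∧ H.Adj v0 v5) ∧
  (G.Adj v1 v2 ∧ H.Adj v1 v2) ∧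
  (G.Adj v3 v4 ∧ H.Adj v3 v4) ∧
  (¬ G.Adj v2 v3 ∧ H.Adj v2 v3) ∧
  (¬ G.Adj v4 v5 ∧ H.Adj v4 v5) ∧
  List.Pairwise (· ≠ ·) [v0, v1, v3, v4] ∧
  (∀ x ∈ [v0, v1, v3, v4], v2 ≠ x ∧ v5 ≠ x)

/-- `b(G)`: the number of 6-tuples valid for an inverse 3-edge switching on `G`. -/
noncomputable def b3 {n : ℕ} (H G : SimpleGraph (Fin n)) : ℕ :=
  Nat.card {v : Fin 6 → Fin n //
    Valid3Inverse H G (v 0) (v 1) (v 2) (v 3) (v 4) (v 5)}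

open Finset

variable {V : Type*} [Fintype V]

-- The decidability instance is a parameter (rather than classical) so that unfolding `count6`
-- exposes the instances `boole_and` and `sum_boole_adj` rewrite with.
def count6 (P : V → V → V → V → V → V → Prop)
    [∀ v0 v1 v2 v3 v4 v5, Decidable (P v0 v1 v2 v3 v4 v5)] : ℕ :=
  ∑ v0, ∑ v1, ∑ v2, ∑ v3, ∑ v4, ∑ v5, if P v0 v1 v2 v3 v4 v5 then 1 else 0

section Count6

variable {P Q R : V → V → V → V → V → V → Prop}
  [∀ v0 v1 v2 v3 v4 v5, Decidable (P v0 v1 v2 v3 v4 v5)]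
  [∀ v0 v1 v2 v3 v4 v5, Decidable (Q v0 v1 v2 v3 v4 v5)]
  [∀ v0 v1 v2 v3 v4 v5, Decidable (R v0 v1 v2 v3 v4 v5)]

lemma natCard_fin6_subtype :
    Nat.card {v : Fin 6 → V // P (v 0) (v 1) (v 2) (v 3) (v 4) (v 5)} = count6 P := by
  let e : (Fin 6 → V) ≃ V × V × V × V × V × V :=
    { toFun := fun v => (v 0, v 1, v 2, v 3, v 4, v 5)
      invFun := fun t => ![t.1, t.2.1, t.2.2.1, t.2.2.2.1, t.2.2.2.2.1, t.2.2.2.2.2]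
      left_inv := fun v => by ext i; fin_cases i <;> rfl
      right_inv := fun t => rfl }
  refine (Nat.card_congr (e.subtypeEquiv
    (q := fun t => P t.1 t.2.1 t.2.2.1 t.2.2.2.1 t.2.2.2.2.1 t.2.2.2.2.2)
    fun _ => Iff.rfl)).trans ?_
  rw [Nat.card_eq_fintype_card, Fintype.card_subtype, card_filter]
  simp only [count6, Fintype.sum_prod_type]

lemma count6_mono (h : ∀ v0 v1 v2 v3 v4 v5, P v0 v1 v2 v3 v4 v5 → Q v0 v1 v2 v3 v4 v5) :
    count6 P ≤ count6 Q := by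
  unfold count6
  gcongr with v0 _ v1 _ v2 _ v3 _ v4 _ v5 _
  split_ifs <;> simp_all

lemma count6_le_add
    (h : ∀ v0 v1 v2 v3 v4 v5,
      P v0 v1 v2 v3 v4 v5 → Q v0 v1 v2 v3 v4 v5 ∨ R v0 v1 v2 v3 v4 v5) :
    count6 P ≤ count6 Q + count6 R := by
  simp only [count6, ← sum_add_distrib]
  gcongr with v0 _ v1 _ v2 _ v3 _ v4 _ v5 _
  by_cases hP : P v0 v1 v2 v3 v4 v5
  · rcases h _ _ _ _ _ _ hP with hQ | hR <;> simp [*]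
  · simp [hP]

lemma count6_reverse_last3 : count6 P = count6 fun v0 v1 v2 v5 v4 v3 => P v0 v1 v2 v3 v4 v5 := by
  unfold count6
  refine sum_congr rfl fun _ _ => sum_congr rfl fun _ _ => sum_congr rfl fun _ _ => ?_
  rw [sum_comm, sum_congr rfl fun _ _ => sum_comm, sum_comm]

lemma count6_rotate_last3 : count6 P = count6 fun v0 v1 v2 v5 v3 v4 => P v0 v1 v2 v3 v4 v5 := by
  unfold count6
  refine sum_congr rfl fun _ _ => sum_congr rfl fun _ _ => sum_congr rfl fun _ _ => ?_
  rw [sum_congr rfl fun _ _ => sum_comm, sum_comm]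

end Count6

lemma boole_and (p q : Prop) [Decidable p] [Decidable q] :
    (if p ∧ q then 1 else 0 : ℕ) = (if p then 1 else 0) * (if q then 1 else 0) := by
  rw [ite_zero_mul_ite_zero, mul_one]

lemma sum_boole_mem [DecidableEq V] (s : Finset V) :
    ∑ x, (if x ∈ s then 1 else 0 : ℕ) = #s := by
  rw [sum_boole, filter_mem_eq_inter, univ_inter, Nat.cast_id]

section Degrees

variable (K L : SimpleGraph V) [DecidableRel K.Adj] [DecidableRel L.Adj]

lemma sum_boole_adj (a : V) : ∑ x, (if K.Adj a x then 1 else 0 : ℕ) = K.degree a := by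
  rw [sum_boole, ← card_neighborFinset_eq_degree, neighborFinset_eq_filter, Nat.cast_id]

lemma sum_boole_adj' (a : V) : ∑ x, (if K.Adj x a then 1 else 0 : ℕ) = K.degree a := by
  simp_rw [K.adj_comm _ a, sum_boole_adj]

lemma sum_degree_eq_two_mul_ncard : ∑ v, K.degree v = 2 * K.edgeSet.ncard := by
  rw [sum_degrees_eq_twice_card_edges, Set.ncard_eq_toFinset_card']
  rfl

lemma sum_degree_mul_degree_le :
    ∑ v, K.degree v * L.degree v ≤ K.maxDegree * (2 * L.edgeSet.ncard) := by
  rw [← sum_degree_eq_two_mul_ncard, mul_sum]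
  gcongr with v
  exact K.degree_le_maxDegree v

lemma two_mul_ncard_edgeSet_of_isRegular {d : ℕ} (hK : K.IsRegularOfDegree d) :
    2 * K.edgeSet.ncard = Fintype.card V * d := by
  rw [← sum_degree_eq_two_mul_ncard]
  simp [hK.degree_eq]

end Degrees

abbrev IsFrame (K M L N : SimpleGraph V) (v0 v1 v2 v3 v4 v5 : V) : Prop :=
  K.Adj v0 v1 ∧ M.Adj v1 v2 ∧ L.Adj v3 v4 ∧ N.Adj v0 v5

section FrameCounts

variable {d : ℕ} {G : SimpleGraph V} [DecidableRel G.Adj]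
  {K L R : SimpleGraph V} [DecidableRel K.Adj] [DecidableRel L.Adj] [DecidableRel R.Adj]

lemma count6_isFrame_of_isRegular (hG : G.IsRegularOfDegree d) :
    count6 (IsFrame K G L G) = 2 * K.edgeSet.ncard * d * (2 * L.edgeSet.ncard) * d := by
  simp only [count6, IsFrame, boole_and, ← mul_assoc, ← mul_sum, ← sum_mul, sum_boole_adj,
    hG.degree_eq, sum_degree_eq_two_mul_ncard]

lemma count6_isFrame_and_adj23_le (hG : G.IsRegularOfDegree d) {C : ℕ}
    (hL : ∀ v, L.degree v ≤ C) :
    count6 (fun v0 v1 v2 v3 v4 v5 => IsFrame K G G G v0 v1 v2 v3 v4 v5 ∧ L.Adj v2 v3)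
      ≤ 2 * K.edgeSet.ncard * d * C * d * d := by
  simp only [count6, IsFrame, boole_and, ← mul_assoc, ← mul_sum, ← sum_mul, sum_boole_adj,
    hG.degree_eq]
  refine (sum_le_sum fun _ _ => sum_le_sum fun _ _ => sum_le_sum fun v _ =>
    Nat.mul_le_mul_left _ (hL v)).trans (le_of_eq ?_)
  simp only [← mul_sum, ← sum_mul, sum_boole_adj, hG.degree_eq, sum_degree_eq_two_mul_ncard]
  ring

lemma count6_isFrame_and_adj45_le (hG : G.IsRegularOfDegree d) {C : ℕ}
    (hL : ∀ v, L.degree v ≤ C) :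
    count6 (fun v0 v1 v2 v3 v4 v5 => IsFrame K G G G v0 v1 v2 v3 v4 v5 ∧ L.Adj v4 v5)
      ≤ 2 * K.edgeSet.ncard * d * C * d * d := by
  rw [count6_reverse_last3]
  simp only [count6, IsFrame, boole_and, ← mul_assoc, ← mul_sum, ← sum_mul, sum_boole_adj',
    hG.degree_eq]
  refine (sum_le_sum fun _ _ => sum_le_sum fun _ _ => sum_le_sum fun _ _ => sum_le_sum fun v _ =>
    Nat.mul_le_mul_left _ (hL v)).trans (le_of_eq ?_)
  simp only [← mul_sum, ← sum_mul, sum_boole_adj, hG.degree_eq, sum_degree_eq_two_mul_ncard]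
  ring

lemma count6_isFrame_and_mem3_le (hG : G.IsRegularOfDegree d) [DecidableEq V] :
    count6 (fun v0 v1 v2 v3 v4 v5 =>
        IsFrame K G G G v0 v1 v2 v3 v4 v5 ∧ v3 ∈ ({v0, v1, v2, v5} : Finset V))
      ≤ 2 * K.edgeSet.ncard * d * d * 4 * d := by
  rw [count6_rotate_last3]
  simp only [count6, IsFrame, boole_and, ← mul_assoc, ← mul_sum, ← sum_mul, sum_boole_adj,
    hG.degree_eq, sum_boole_mem]
  refine (sum_le_sum fun _ _ => sum_le_sum fun _ _ => sum_le_sum fun _ _ => sum_le_sum fun _ _ =>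
    Nat.mul_le_mul_left _ card_le_four).trans (le_of_eq ?_)
  simp only [← mul_sum, ← sum_mul, sum_boole_adj, hG.degree_eq, sum_degree_eq_two_mul_ncard]
  ring

lemma count6_isFrame_and_mem4_le (hG : G.IsRegularOfDegree d) [DecidableEq V] :
    count6 (fun v0 v1 v2 v3 v4 v5 =>
        IsFrame K G G G v0 v1 v2 v3 v4 v5 ∧ v4 ∈ ({v0, v1, v2, v5} : Finset V))
      ≤ 2 * K.edgeSet.ncard * d * d * 4 * d := by
  rw [count6_reverse_last3]
  simp only [count6, IsFrame, boole_and, ← mul_assoc, ← mul_sum, ← sum_mul, sum_boole_adj',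
    hG.degree_eq, sum_boole_mem]
  refine (sum_le_sum fun _ _ => sum_le_sum fun _ _ => sum_le_sum fun _ _ => sum_le_sum fun _ _ =>
    Nat.mul_le_mul_left _ card_le_four).trans (le_of_eq ?_)
  simp only [← mul_sum, ← sum_mul, sum_boole_adj, hG.degree_eq, sum_degree_eq_two_mul_ncard]
  ring

lemma count6_isFrame_adj05_le (hG : G.IsRegularOfDegree d) :
    count6 (IsFrame K G L R) ≤
      K.maxDegree * (2 * R.edgeSet.ncard) * d * (2 * L.edgeSet.ncard) := by
  simp only [count6, IsFrame, boole_and, ← mul_assoc, ← mul_sum, ← sum_mul, sum_boole_adj,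
    hG.degree_eq, sum_degree_eq_two_mul_ncard]
  calc ∑ v, K.degree v * d * 2 * L.edgeSet.ncard * R.degree v
      = (∑ v, K.degree v * R.degree v) * (d * (2 * L.edgeSet.ncard)) := by
        rw [sum_mul]; exact sum_congr rfl fun v _ => by ring
    _ ≤ _ := by grw [sum_degree_mul_degree_le]; exact le_of_eq (by ring)

lemma count6_isFrame_adj12_le (hG : G.IsRegularOfDegree d) :
    count6 (IsFrame K R L G) ≤
      K.maxDegree * (2 * R.edgeSet.ncard) * d * (2 * L.edgeSet.ncard) := by
  simp only [count6, IsFrame, boole_and, ← mul_assoc, ← mul_sum, ← sum_mul, sum_boole_adj,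
    hG.degree_eq, sum_degree_eq_two_mul_ncard]
  rw [sum_comm]
  simp only [← sum_mul, sum_boole_adj']
  grw [sum_degree_mul_degree_le]
  exact le_of_eq (by ring)

end FrameCounts

section Switching

variable {n : ℕ} {H G : SimpleGraph (Fin n)}

lemma b3_eq_count6 : b3 H G = count6 (Valid3Inverse H G) :=
  natCard_fin6_subtype

lemma valid3Inverse_or_of_isFrame {v0 v1 v2 v3 v4 v5 : Fin n}
    (hF : IsFrame (Hᶜ \ G) G G G v0 v1 v2 v3 v4 v5) :
    Valid3Inverse H G v0 v1 v2 v3 v4 v5 ∨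
      IsFrame (Hᶜ \ G) G (G ⊓ Hᶜ) G v0 v1 v2 v3 v4 v5 ∨
      (IsFrame (Hᶜ \ G) G G G v0 v1 v2 v3 v4 v5 ∧ v3 ∈ ({v0, v1, v2, v5} : Finset _)) ∨
      (IsFrame (Hᶜ \ G) G G G v0 v1 v2 v3 v4 v5 ∧ v4 ∈ ({v0, v1, v2, v5} : Finset _)) ∨
      (IsFrame Hᶜ G G G v0 v1 v2 v3 v4 v5 ∧ G.Adj v2 v3) ∨
      (IsFrame Hᶜ G G G v0 v1 v2 v3 v4 v5 ∧ Hᶜ.Adj v2 v3) ∨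
      (IsFrame Hᶜ G G G v0 v1 v2 v3 v4 v5 ∧ G.Adj v4 v5) ∨
      (IsFrame Hᶜ G G G v0 v1 v2 v3 v4 v5 ∧ Hᶜ.Adj v4 v5) ∨
      IsFrame Hᶜ G G (G ⊓ Hᶜ) v0 v1 v2 v3 v4 v5 ∨
      IsFrame Hᶜ (G ⊓ Hᶜ) G G v0 v1 v2 v3 v4 v5 := by
  obtain ⟨hA, h12, h34, h05⟩ := id hF
  have hF' : IsFrame Hᶜ G G G v0 v1 v2 v3 v4 v5 := ⟨hA.1, h12, h34, h05⟩
  by_contra! hbad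
  obtain ⟨hV, r34, m3, m4, g23, c23, g45, c45, r05, r12⟩ := hbad
  obtain ⟨h30, h31, h32, h35⟩ : v3 ≠ v0 ∧ v3 ≠ v1 ∧ v3 ≠ v2 ∧ v3 ≠ v5 := by
    simpa using m3 hF
  obtain ⟨h40, h41, h42, h45⟩ : v4 ≠ v0 ∧ v4 ≠ v1 ∧ v4 ≠ v2 ∧ v4 ≠ v5 := by
    simpa using m4 hF
  have black : ∀ {u v}, u ≠ v → ¬Hᶜ.Adj u v → H.Adj u v := fun hne h => by
    simpa [compl_adj, hne] using h
  have h20 : v2 ≠ v0 := by rintro rfl; exact hA.2 h12.symm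
  have h51 : v5 ≠ v1 := by rintro rfl; exact hA.2 h05
  refine hV ⟨⟨hA.2, hA.1⟩, ⟨h05, black h05.ne fun h => r05 ⟨hA.1, h12, h34, h05, h⟩⟩,
    ⟨h12, black h12.ne fun h => r12 ⟨hA.1, ⟨h12, h⟩, h34, h05⟩⟩,
    ⟨h34, black h34.ne fun h => r34 ⟨hA, h12, ⟨h34, h⟩, h05⟩⟩,
    ⟨g23 hF', black h32.symm (c23 hF')⟩, ⟨g45 hF', black h45 (c45 hF')⟩, ?_, ?_⟩
  · simp [hA.1.ne, h34.ne, h30.symm, h31.symm, h40.symm, h41.symm]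
  · simp [h20, h12.ne.symm, h32.symm, h42.symm, h05.ne.symm, h51, h35.symm, h45.symm]

lemma count6_isFrame_le_b3_add {d : ℕ} (hG : G.IsRegularOfDegree d) :
    count6 (IsFrame (Hᶜ \ G) G G G) ≤ b3 H G +
      (2 * (Hᶜ \ G).edgeSet.ncard * d * (2 * (G ⊓ Hᶜ).edgeSet.ncard) * d +
      (2 * (Hᶜ \ G).edgeSet.ncard * d * d * 4 * d +
      (2 * (Hᶜ \ G).edgeSet.ncard * d * d * 4 * d +
      (2 * Hᶜ.edgeSet.ncard * d * d * d * d +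
      (2 * Hᶜ.edgeSet.ncard * d * Hᶜ.maxDegree * d * d +
      (2 * Hᶜ.edgeSet.ncard * d * d * d * d +
      (2 * Hᶜ.edgeSet.ncard * d * Hᶜ.maxDegree * d * d +
      (Hᶜ.maxDegree * (2 * (G ⊓ Hᶜ).edgeSet.ncard) * d * (2 * G.edgeSet.ncard) +
      Hᶜ.maxDegree * (2 * (G ⊓ Hᶜ).edgeSet.ncard) * d * (2 * G.edgeSet.ncard))))))))) := by
  have hdeg : ∀ v, G.degree v ≤ d := fun v => (hG.degree_eq v).le
  rw [b3_eq_count6]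
  refine (count6_le_add fun _ _ _ _ _ _ => valid3Inverse_or_of_isFrame).trans
    (add_le_add le_rfl ?_)
  refine (count6_le_add fun _ _ _ _ _ _ h => h).trans
    (add_le_add (count6_isFrame_of_isRegular hG).le ?_)
  refine (count6_le_add fun _ _ _ _ _ _ h => h).trans
    (add_le_add (count6_isFrame_and_mem3_le hG) ?_)
  refine (count6_le_add fun _ _ _ _ _ _ h => h).trans
    (add_le_add (count6_isFrame_and_mem4_le hG) ?_)
  refine (count6_le_add fun _ _ _ _ _ _ h => h).trans
    (add_le_add (count6_isFrame_and_adj23_le hG hdeg) ?_)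
  refine (count6_le_add fun _ _ _ _ _ _ h => h).trans
    (add_le_add (count6_isFrame_and_adj23_le hG Hᶜ.degree_le_maxDegree) ?_)
  refine (count6_le_add fun _ _ _ _ _ _ h => h).trans
    (add_le_add (count6_isFrame_and_adj45_le hG hdeg) ?_)
  refine (count6_le_add fun _ _ _ _ _ _ h => h).trans
    (add_le_add (count6_isFrame_and_adj45_le hG Hᶜ.degree_le_maxDegree) ?_)
  exact (count6_le_add fun _ _ _ _ _ _ h => h).trans
    (add_le_add (count6_isFrame_adj05_le hG) (count6_isFrame_adj12_le hG))

end Switching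

lemma ncard_edgeSet_sdiff_add_inf (H G : SimpleGraph V) :
    (Hᶜ \ G).edgeSet.ncard + (G ⊓ Hᶜ).edgeSet.ncard = Hᶜ.edgeSet.ncard := by
  rw [edgeSet_sdiff, edgeSet_inf, Set.inter_comm, add_comm]
  exact Set.ncard_inter_add_ncard_sdiff_eq_ncard _ _ (Set.toFinite _)

theorem stmt_5_general (n d i : ℕ)
    (H : SimpleGraph (Fin n))
    (G : SimpleGraph (Fin n)) (hreg : G.IsRegularOfDegree d)
    (hred : (G ⊓ Hᶜ).edgeSet.ncard = i) :
    ((2 * Hᶜ.edgeSet.ncard - 2 * i) * d ^ 2 * (d * n - 2 * i - 8 * d)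
        - 4 * Hᶜ.edgeSet.ncard * d ^ 3 * (d + Hᶜ.maxDegree)
        - 4 * i * Hᶜ.maxDegree * d ^ 2 * n : ℤ) ≤ (b3 H G : ℤ) ∧
      (b3 H G : ℤ) ≤ 2 * Hᶜ.edgeSet.ncard * d ^ 3 * n := by
  have hG : 2 * G.edgeSet.ncard = n * d := by
    rw [two_mul_ncard_edgeSet_of_isRegular G hreg, Fintype.card_fin]
  have hsplit : ((Hᶜ \ G).edgeSet.ncard + i : ℤ) = Hᶜ.edgeSet.ncard := by
    rw [← hred]; exact_mod_cast ncard_edgeSet_sdiff_add_inf H G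
  have hlow := count6_isFrame_le_b3_add (H := H) hreg
  have hup : b3 H G ≤ count6 (IsFrame Hᶜ G G G) := by
    rw [b3_eq_count6]
    exact count6_mono fun _ _ _ _ _ _ h => ⟨h.1.2, h.2.2.1.1, h.2.2.2.1.1, h.2.1.1⟩
  rw [count6_isFrame_of_isRegular hreg] at hlow hup
  simp only [hG, hred] at hlow hup
  zify at hlow hup
  rw [← hsplit] at hlow hup ⊢
  constructor
  · linarith
  · linarith

/-- backward-count bounds of Lemma 3. If `G` is `d`-regular with exactly
`i` red edges and `dn ≥ 2i + 8d`, then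
`(2|E(Hᶜ)|−2i)d²(dn−2i−8d) − 4|E(Hᶜ)|d³(d+Δ) − 4iΔd²n ≤ b(G) ≤ 2|E(Hᶜ)|d³n`. -/
theorem stmt_5 (n d i : ℕ) (hn : 0 < n) (hd : 0 < d)
    (H : SimpleGraph (Fin n)) (hdn : 2 * i + 8 * d ≤ d * n)
    (G : SimpleGraph (Fin n)) (hreg : G.IsRegularOfDegree d)
    (hred : (G ⊓ Hᶜ).edgeSet.ncard = i) :
    ((2 * Hᶜ.edgeSet.ncard - 2 * i) * d ^ 2 * (d * n - 2 * i - 8 * d)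
        - 4 * Hᶜ.edgeSet.ncard * d ^ 3 * (d + Hᶜ.maxDegree)
        - 4 * i * Hᶜ.maxDegree * d ^ 2 * n : ℤ) ≤ (b3 H G : ℤ) ∧
      (b3 H G : ℤ) ≤ 2 * Hᶜ.edgeSet.ncard * d ^ 3 * n :=
  stmt_5_general n d i H G hreg hred
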